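/- Let I and I' be bounded intervals of ℝ. (1) If I = I' = ∅ then d(χ_I, χ_{I'}) = 0. (2) If I' = ∅ and I is nonempty with infimum a and supremum b, then d(χ_I, χ_{I'}) = (b−a)/2. (3) If I and I' are nonempty with infima a, a' and suprema b, b' respectively, then d(χ_I, χ_{I'}) = min( max(|a−a'|, |b−b'|), max((b−a)/2, (b'−a')/2) ). -/

import Mathlib

open CategoryTheory

universe u v

/-- The translation functor `a ↦ a + ε` on the poset category `(ℝ, ≤)`. -/
noncomputable def Tr (ε : ℝ) : ℝ ⥤ ℝ :=
  Monotone.functor (f := fun a => a + ε) (fun _ _ h => by simpa using h)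

/-- An `ε`-interleaving of `(ℝ,≤)`-indexed diagrams `F` and `G` in a category `D`:
natural transformations `φ : F ⇒ G ∘ T_ε` and `ψ : G ⇒ F ∘ T_ε` (given componentwise,
together with their naturality squares) such that the two triangle identities
`ψ(a+ε) ∘ φ(a) = F(a ≤ a+2ε)` and `φ(a+ε) ∘ ψ(a) = G(a ≤ a+2ε)` hold. Requires `0 ≤ ε`. -/
structure Interleaving {D : Type u} [Category.{v} D] (ε : ℝ) (F G : ℝ ⥤ D) where
  hε : 0 ≤ ε
  φ : ∀ a : ℝ, F.obj a ⟶ G.obj (a + ε)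
  ψ : ∀ a : ℝ, G.obj a ⟶ F.obj (a + ε)
  natφ : ∀ (a b : ℝ) (h : a ≤ b),
    F.map (homOfLE h) ≫ φ b = φ a ≫ G.map (homOfLE (by linarith : a + ε ≤ b + ε))
  natψ : ∀ (a b : ℝ) (h : a ≤ b),
    G.map (homOfLE h) ≫ ψ b = ψ a ≫ F.map (homOfLE (by linarith : a + ε ≤ b + ε))
  triφ : ∀ a : ℝ,
    φ a ≫ ψ (a + ε) = F.map (homOfLE (by linarith : a ≤ a + ε + ε))
  triψ : ∀ a : ℝ,
    ψ a ≫ φ (a + ε) = G.map (homOfLE (by linarith : a ≤ a + ε + ε))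

/-- `F` and `G` are `ε`-interleaved if an `ε`-interleaving exists. -/
def Interleaved {D : Type u} [Category.{v} D] (ε : ℝ) (F G : ℝ ⥤ D) : Prop :=
  Nonempty (Interleaving ε F G)

/-- The interleaving distance between two `(ℝ,≤)`-indexed diagrams, an extended
nonnegative real number; it is `∞` if `F` and `G` are not `ε`-interleaved for any `ε ≥ 0`. -/
noncomputable def interleavingDist {D : Type u} [Category.{v} D] (F G : ℝ ⥤ D) : ENNReal :=
  sInf (ENNReal.ofReal '' {ε : ℝ | Interleaved ε F G})

open CategoryTheory Limits

noncomputable section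

variable (𝕜 : Type) [Field 𝕜]

open Classical in
/-- The value of the interval module `χ_I` at `a : ℝ`: the field `𝕜` (as the full submodule
of itself) if `a ∈ I`, and `0` (the trivial submodule) otherwise. -/
def chiObj (I : Set ℝ) (a : ℝ) : Submodule 𝕜 𝕜 :=
  if a ∈ I then ⊤ else ⊥

open Classical in
/-- The structure map of the interval module `χ_I`: the identity of `𝕜` if `a, b ∈ I`,
and `0` otherwise. -/
def chiMap (I : Set ℝ) {a b : ℝ} (_ : a ≤ b) :
    chiObj 𝕜 I a →ₗ[𝕜] chiObj 𝕜 I b :=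
  if h : chiObj 𝕜 I a ≤ chiObj 𝕜 I b then Submodule.inclusion h else 0

open Classical in
lemma chiMap_val (I : Set ℝ) {a b : ℝ} (hab : a ≤ b) (x : chiObj 𝕜 I a) :
    (chiMap 𝕜 I hab x : 𝕜) = if b ∈ I then (x : 𝕜) else 0 := by
  by_cases hb : b ∈ I
  · have h : chiObj 𝕜 I a ≤ chiObj 𝕜 I b := by
      simp only [chiObj, if_pos hb]
      exact le_top
    rw [chiMap, dif_pos h, if_pos hb]
    rfl
  · rw [if_neg hb]
    by_cases ha : a ∈ I
    · have h : ¬ chiObj 𝕜 I a ≤ chiObj 𝕜 I b := by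
        simp only [chiObj, if_pos ha, if_neg hb]
        intro h
        have := h (Submodule.mem_top (x := (1 : 𝕜)))
        exact one_ne_zero ((Submodule.mem_bot 𝕜).mp this)
      rw [chiMap, dif_neg h]
      rfl
    · have hx : (x : 𝕜) = 0 := by
        have := x.2
        simp only [chiObj, if_neg ha] at this
        exact (Submodule.mem_bot 𝕜).mp this
      by_cases h : chiObj 𝕜 I a ≤ chiObj 𝕜 I b
      · rw [chiMap, dif_pos h]
        simpa [Submodule.inclusion] using hx
      · rw [chiMap, dif_neg h]
        rfl

lemma chiMap_id (I : Set ℝ) (a : ℝ) :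
    chiMap 𝕜 I (le_refl a) = LinearMap.id := by
  apply LinearMap.ext
  intro x
  apply Subtype.ext
  rw [chiMap_val]
  classical
  by_cases ha : a ∈ I
  · rw [if_pos ha]
    rfl
  · rw [if_neg ha]
    have := x.2
    simp only [chiObj, if_neg ha] at this
    have hx := (Submodule.mem_bot 𝕜).mp this
    simp [hx]

lemma chiMap_comp (I : Set ℝ) (hI : I.OrdConnected) {a b c : ℝ} (hab : a ≤ b) (hbc : b ≤ c) :
    chiMap 𝕜 I hbc ∘ₗ chiMap 𝕜 I hab = chiMap 𝕜 I (hab.trans hbc) := by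
  apply LinearMap.ext
  intro x
  apply Subtype.ext
  show (chiMap 𝕜 I hbc (chiMap 𝕜 I hab x) : 𝕜) = (chiMap 𝕜 I (hab.trans hbc) x : 𝕜)
  rw [chiMap_val, chiMap_val, chiMap_val]
  classical
  by_cases hc : c ∈ I
  · rw [if_pos hc, if_pos hc]
    by_cases hb : b ∈ I
    · rw [if_pos hb]
    · rw [if_neg hb]
      by_cases ha : a ∈ I
      · exact absurd (hI.out ha hc ⟨hab, hbc⟩) hb
      · have := x.2
        simp only [chiObj, if_neg ha, Submodule.mem_bot] at this
        simp [this]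
  · rw [if_neg hc, if_neg hc]

/-- The interval module (diagram) `χ_I : (ℝ,≤) ⥤ Vec` associated to an interval `I ⊆ ℝ`
(`Vec` is the category of finite-dimensional `𝕜`-vector spaces): it is `𝕜` on `I` with
identity structure maps, and `0` elsewhere. -/
def chi (I : Set ℝ) (hI : I.OrdConnected) : ℝ ⥤ FGModuleCat 𝕜 where
  obj a := FGModuleCat.of 𝕜 (chiObj 𝕜 I a)
  map {a b} h := FGModuleCat.ofHom (chiMap 𝕜 I (leOfHom h))
  map_id a := by rw [chiMap_id 𝕜 I a]; rfl
  map_comp {a b c} h h' := by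
    rw [← chiMap_comp 𝕜 I hI (leOfHom h) (leOfHom h')]; rfl

end


section AuxIL

open Classical ENNReal

variable (𝕜 : Type) [Field 𝕜]

open Classical in
noncomputable def crossMap (I J : Set ℝ) (x y : ℝ) :
    chiObj 𝕜 I x →ₗ[𝕜] chiObj 𝕜 J y :=
  if h : chiObj 𝕜 I x ≤ chiObj 𝕜 J y then Submodule.inclusion h else 0

open Classical in
lemma crossMap_val (I J : Set ℝ) (x y : ℝ) (v : chiObj 𝕜 I x) :
    (crossMap 𝕜 I J x y v : 𝕜) = if y ∈ J then (v : 𝕜) else 0 := by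
  rw [crossMap]
  by_cases h : chiObj 𝕜 I x ≤ chiObj 𝕜 J y
  · rw [dif_pos h]
    by_cases hy : y ∈ J
    · rw [if_pos hy]; rfl
    · rw [if_neg hy]
      have hb : chiObj 𝕜 J y = ⊥ := by simp only [chiObj, if_neg hy]
      have hv : (v : 𝕜) ∈ chiObj 𝕜 J y := h v.2
      rw [hb, Submodule.mem_bot] at hv
      show (v : 𝕜) = 0
      exact hv
  · rw [dif_neg h]
    have hy : y ∉ J := fun hy => h (by simp only [chiObj, if_pos hy]; exact le_top)
    rw [if_neg hy]
    rfl

lemma fgHomExt {M N : FGModuleCat 𝕜} {f g : M ⟶ N} (h : ∀ x : M, f x = g x) : f = g :=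
  FGModuleCat.hom_ext (LinearMap.ext h)

lemma hom_congr {M N : FGModuleCat 𝕜} {f g : M ⟶ N} (h : f = g) (x : M) : f x = g x := by
  rw [h]

lemma hom_comp_val {M N P : FGModuleCat 𝕜} (f : M ⟶ N) (g : N ⟶ P) (x : M) :
    (f ≫ g) x = g (f x) := rfl

lemma chi_map_eq (I : Set ℝ) (hI : I.OrdConnected) {a b : ℝ} (h : a ≤ b) :
    (chi 𝕜 I hI).map (homOfLE h) = FGModuleCat.ofHom (chiMap 𝕜 I h) := rfl

lemma mem_of_lt_of_le {I : Set ℝ} (hI : I.OrdConnected) (hne : I.Nonempty) {t w : ℝ}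
    (h1 : sInf I < t) (hw : w ∈ I) (h2 : t ≤ w) : t ∈ I := by
  obtain ⟨z, hz, hzt⟩ := exists_lt_of_csInf_lt hne h1
  exact hI.out hz hw ⟨hzt.le, h2⟩

lemma mem_of_le_of_lt {I : Set ℝ} (hI : I.OrdConnected) (hne : I.Nonempty) {t z : ℝ}
    (hz : z ∈ I) (h1 : z ≤ t) (h2 : t < sSup I) : t ∈ I := by
  obtain ⟨w, hw, htw⟩ := exists_lt_of_lt_csSup hne h2
  exact hI.out hz hw ⟨h1, htw.le⟩

lemma mem_of_lt_of_lt {I : Set ℝ} (hI : I.OrdConnected) (hne : I.Nonempty) {t : ℝ}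
    (h1 : sInf I < t) (h2 : t < sSup I) : t ∈ I := by
  obtain ⟨z, hz, hzt⟩ := exists_lt_of_csInf_lt hne h1
  exact mem_of_le_of_lt hI hne hz hzt.le h2

/-- The zero interleaving, available when no structure map over a gap of `2ε` is nonzero. -/
noncomputable def zeroIL (I I' : Set ℝ) (hI : I.OrdConnected) (hI' : I'.OrdConnected)
    (ε : ℝ) (hε : 0 ≤ ε)
    (h1 : ∀ x, x ∈ I → x + ε + ε ∉ I) (h2 : ∀ x, x ∈ I' → x + ε + ε ∉ I') :
    Interleaving ε (chi 𝕜 I hI) (chi 𝕜 I' hI') where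
  hε := hε
  φ a := FGModuleCat.ofHom (0 : chiObj 𝕜 I a →ₗ[𝕜] chiObj 𝕜 I' (a + ε))
  ψ a := FGModuleCat.ofHom (0 : chiObj 𝕜 I' a →ₗ[𝕜] chiObj 𝕜 I (a + ε))
  natφ a b h := by
    have key : (0 : chiObj 𝕜 I b →ₗ[𝕜] chiObj 𝕜 I' (b + ε)).comp (chiMap 𝕜 I h) =
        (chiMap 𝕜 I' (by linarith : a + ε ≤ b + ε)).comp
          (0 : chiObj 𝕜 I a →ₗ[𝕜] chiObj 𝕜 I' (a + ε)) := by
      rw [LinearMap.zero_comp, LinearMap.comp_zero]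
    exact FGModuleCat.hom_ext key
  natψ a b h := by
    have key : (0 : chiObj 𝕜 I' b →ₗ[𝕜] chiObj 𝕜 I (b + ε)).comp (chiMap 𝕜 I' h) =
        (chiMap 𝕜 I (by linarith : a + ε ≤ b + ε)).comp
          (0 : chiObj 𝕜 I' a →ₗ[𝕜] chiObj 𝕜 I (a + ε)) := by
      rw [LinearMap.zero_comp, LinearMap.comp_zero]
    exact FGModuleCat.hom_ext key
  triφ a := by
    have key : (0 : chiObj 𝕜 I' (a + ε) →ₗ[𝕜] chiObj 𝕜 I (a + ε + ε)).comp
        (0 : chiObj 𝕜 I a →ₗ[𝕜] chiObj 𝕜 I' (a + ε)) =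
        chiMap 𝕜 I (by linarith : a ≤ a + ε + ε) := by
      refine LinearMap.ext fun v => Subtype.ext ?_
      simp only [LinearMap.comp_apply, LinearMap.zero_apply, chiMap_val]
      by_cases hm : a + ε + ε ∈ I
      · have ha : a ∉ I := fun ha => h1 a ha hm
        have hv : (v : 𝕜) = 0 := by
          have := v.2
          simp only [chiObj, if_neg ha] at this
          exact (Submodule.mem_bot 𝕜).mp this
        simp [hm, hv]
      · simp [hm]
    exact FGModuleCat.hom_ext key
  triψ a := by
    have key : (0 : chiObj 𝕜 I (a + ε) →ₗ[𝕜] chiObj 𝕜 I' (a + ε + ε)).comp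
        (0 : chiObj 𝕜 I' a →ₗ[𝕜] chiObj 𝕜 I (a + ε)) =
        chiMap 𝕜 I' (by linarith : a ≤ a + ε + ε) := by
      refine LinearMap.ext fun v => Subtype.ext ?_
      simp only [LinearMap.comp_apply, LinearMap.zero_apply, chiMap_val]
      by_cases hm : a + ε + ε ∈ I'
      · have ha : a ∉ I' := fun ha => h2 a ha hm
        have hv : (v : 𝕜) = 0 := by
          have := v.2
          simp only [chiObj, if_neg ha] at this
          exact (Submodule.mem_bot 𝕜).mp this
        simp [hm, hv]
      · simp [hm]
    exact FGModuleCat.hom_ext key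

/-- The shift interleaving, available when the endpoints are strictly within `ε`. -/
noncomputable def shiftIL (I I' : Set ℝ) (hI : I.OrdConnected) (hI' : I'.OrdConnected)
    (hne : I.Nonempty) (hne' : I'.Nonempty)
    (hbb : BddBelow I) (hba : BddAbove I) (hbb' : BddBelow I') (hba' : BddAbove I')
    (ε : ℝ)
    (e1 : sInf I' < sInf I + ε) (e2 : sInf I < sInf I' + ε)
    (e3 : sSup I' < sSup I + ε) (e4 : sSup I < sSup I' + ε) :
    Interleaving ε (chi 𝕜 I hI) (chi 𝕜 I' hI') where
  hε := by linarith
  φ a := FGModuleCat.ofHom (crossMap 𝕜 I I' a (a + ε))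
  ψ a := FGModuleCat.ofHom (crossMap 𝕜 I' I a (a + ε))
  natφ a b h := by
    have key : (crossMap 𝕜 I I' b (b + ε)).comp (chiMap 𝕜 I h) =
        (chiMap 𝕜 I' (by linarith : a + ε ≤ b + ε)).comp (crossMap 𝕜 I I' a (a + ε)) := by
      refine LinearMap.ext fun v => Subtype.ext ?_
      simp only [LinearMap.comp_apply, crossMap_val, chiMap_val]
      by_cases hb : b + ε ∈ I'
      · rw [if_pos hb, if_pos hb]
        by_cases ha : a ∈ I
        · have hbI : b ∈ I := by
            refine mem_of_le_of_lt hI hne ha h ?_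
            have : b + ε ≤ sSup I' := le_csSup hba' hb
            linarith
          have haI' : a + ε ∈ I' := by
            refine mem_of_lt_of_le hI' hne' ?_ hb (by linarith)
            have : sInf I ≤ a := csInf_le hbb ha
            linarith
          rw [if_pos hbI, if_pos haI']
        · have hv : (v : 𝕜) = 0 := by
            have := v.2
            simp only [chiObj, if_neg ha] at this
            exact (Submodule.mem_bot 𝕜).mp this
          simp [hv]
      · rw [if_neg hb, if_neg hb]
    exact FGModuleCat.hom_ext key
  natψ a b h := by
    have key : (crossMap 𝕜 I' I b (b + ε)).comp (chiMap 𝕜 I' h) =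
        (chiMap 𝕜 I (by linarith : a + ε ≤ b + ε)).comp (crossMap 𝕜 I' I a (a + ε)) := by
      refine LinearMap.ext fun v => Subtype.ext ?_
      simp only [LinearMap.comp_apply, crossMap_val, chiMap_val]
      by_cases hb : b + ε ∈ I
      · rw [if_pos hb, if_pos hb]
        by_cases ha : a ∈ I'
        · have hbI : b ∈ I' := by
            refine mem_of_le_of_lt hI' hne' ha h ?_
            have : b + ε ≤ sSup I := le_csSup hba hb
            linarith
          have haI : a + ε ∈ I := by
            refine mem_of_lt_of_le hI hne ?_ hb (by linarith)
            have : sInf I' ≤ a := csInf_le hbb' ha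
            linarith
          rw [if_pos hbI, if_pos haI]
        · have hv : (v : 𝕜) = 0 := by
            have := v.2
            simp only [chiObj, if_neg ha] at this
            exact (Submodule.mem_bot 𝕜).mp this
          simp [hv]
      · rw [if_neg hb, if_neg hb]
    exact FGModuleCat.hom_ext key
  triφ a := by
    have key : (crossMap 𝕜 I' I (a + ε) (a + ε + ε)).comp (crossMap 𝕜 I I' a (a + ε)) =
        chiMap 𝕜 I (by linarith : a ≤ a + ε + ε) := by
      refine LinearMap.ext fun v => Subtype.ext ?_
      simp only [LinearMap.comp_apply, crossMap_val, chiMap_val]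
      by_cases hm : a + ε + ε ∈ I
      · rw [if_pos hm, if_pos hm]
        by_cases ha : a ∈ I
        · have haI' : a + ε ∈ I' := by
            refine mem_of_lt_of_lt hI' hne' ?_ ?_
            · have : sInf I ≤ a := csInf_le hbb ha
              linarith
            · have : a + ε + ε ≤ sSup I := le_csSup hba hm
              linarith
          rw [if_pos haI']
        · have hv : (v : 𝕜) = 0 := by
            have := v.2
            simp only [chiObj, if_neg ha] at this
            exact (Submodule.mem_bot 𝕜).mp this
          simp [hv]
      · rw [if_neg hm, if_neg hm]
    exact FGModuleCat.hom_ext key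
  triψ a := by
    have key : (crossMap 𝕜 I I' (a + ε) (a + ε + ε)).comp (crossMap 𝕜 I' I a (a + ε)) =
        chiMap 𝕜 I' (by linarith : a ≤ a + ε + ε) := by
      refine LinearMap.ext fun v => Subtype.ext ?_
      simp only [LinearMap.comp_apply, crossMap_val, chiMap_val]
      by_cases hm : a + ε + ε ∈ I'
      · rw [if_pos hm, if_pos hm]
        by_cases ha : a ∈ I'
        · have haI : a + ε ∈ I := by
            refine mem_of_lt_of_lt hI hne ?_ ?_
            · have : sInf I' ≤ a := csInf_le hbb' ha
              linarith
            · have : a + ε + ε ≤ sSup I' := le_csSup hba' hm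
              linarith
          rw [if_pos haI]
        · have hv : (v : 𝕜) = 0 := by
            have := v.2
            simp only [chiObj, if_neg ha] at this
            exact (Submodule.mem_bot 𝕜).mp this
          simp [hv]
      · rw [if_neg hm, if_neg hm]
    exact FGModuleCat.hom_ext key

/-- Swap the two sides of an interleaving. -/
noncomputable def Interleaving.swap {D : Type u} [Category.{v} D] {ε : ℝ} {F G : ℝ ⥤ D}
    (il : Interleaving ε F G) : Interleaving ε G F where
  hε := il.hε
  φ := il.ψ
  ψ := il.φ
  natφ := il.natψ
  natψ := il.natφ
  triφ := il.triψ
  triψ := il.triφ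

/-- An `ε`-interleaving forces `I'` to contain the `ε`-shift of any `2ε`-gap in `I`. -/
lemma il_forces {I I' : Set ℝ} {hI : I.OrdConnected} {hI' : I'.OrdConnected}
    {ε : ℝ} (il : Interleaving ε (chi 𝕜 I hI) (chi 𝕜 I' hI'))
    {x : ℝ} (hx : x ∈ I) (hx2 : x + ε + ε ∈ I) : x + ε ∈ I' := by
  classical
  by_contra hc
  have hv1 : (1 : 𝕜) ∈ chiObj 𝕜 I x := by simp [chiObj, hx]
  set v : chiObj 𝕜 I x := ⟨1, hv1⟩ with hv
  let f : chiObj 𝕜 I x →ₗ[𝕜] chiObj 𝕜 I' (x + ε) := (il.φ x).hom.hom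
  let g : chiObj 𝕜 I' (x + ε) →ₗ[𝕜] chiObj 𝕜 I (x + ε + ε) := (il.ψ (x + ε)).hom.hom
  have h : g.comp f = chiMap 𝕜 I (by linarith [il.hε] : x ≤ x + ε + ε) :=
    congrArg (fun m => m.hom.hom) (il.triφ x)
  have hc1 := LinearMap.congr_fun h v
  rw [LinearMap.comp_apply] at hc1
  have hf0 : f v = 0 := by
    apply Subtype.ext
    have h2 := (f v).2
    simp only [chiObj, if_neg hc, Submodule.mem_bot] at h2
    exact h2
  rw [hf0, map_zero] at hc1
  have hval := congrArg (fun z : chiObj 𝕜 I (x + ε + ε) => (z : 𝕜)) hc1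
  simp only [chiMap_val, if_pos hx2] at hval
  have hval2 : (0 : 𝕜) = 1 := by simpa [hv] using hval
  exact zero_ne_one hval2

lemma il_contain {I I' : Set ℝ} {hI : I.OrdConnected} {hI' : I'.OrdConnected}
    (hne : I.Nonempty) (hbb' : BddBelow I') (hba' : BddAbove I')
    {ε : ℝ} (il : Interleaving ε (chi 𝕜 I hI) (chi 𝕜 I' hI'))
    (hlen : ε + ε < sSup I - sInf I) :
    sInf I' ≤ sInf I + ε ∧ sSup I - ε ≤ sSup I' := by
  have hε : 0 ≤ ε := il.hε
  have key : ∀ t : ℝ, sInf I + ε < t → t < sSup I - ε → t ∈ I' := by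
    intro t h1 h2
    have htm : t - ε ∈ I := mem_of_lt_of_lt hI hne (by linarith) (by linarith)
    have htp : t - ε + ε + ε ∈ I := by
      have : t - ε + ε + ε = t + ε := by ring
      rw [this]
      exact mem_of_lt_of_lt hI hne (by linarith) (by linarith)
    have := il_forces 𝕜 il htm htp
    have he : t - ε + ε = t := by ring
    rwa [he] at this
  constructor
  · by_contra hcon
    push_neg at hcon
    set t := (sInf I + ε + min (sInf I') (sSup I - ε)) / 2 with ht
    have hm1 : sInf I + ε < min (sInf I') (sSup I - ε) := lt_min hcon (by linarith)
    have ht1 : sInf I + ε < t := by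
      rw [ht]; linarith
    have ht2 : t < min (sInf I') (sSup I - ε) := by
      rw [ht]; linarith
    have htI' : t ∈ I' := key t ht1 (lt_of_lt_of_le ht2 (min_le_right _ _))
    have : sInf I' ≤ t := csInf_le hbb' htI'
    have := lt_of_lt_of_le ht2 (min_le_left _ _)
    linarith
  · by_contra hcon
    push_neg at hcon
    set t := (max (sSup I') (sInf I + ε) + (sSup I - ε)) / 2 with ht
    have hm1 : max (sSup I') (sInf I + ε) < sSup I - ε := max_lt hcon (by linarith)
    have ht1 : max (sSup I') (sInf I + ε) < t := by
      rw [ht]; linarith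
    have ht2 : t < sSup I - ε := by
      rw [ht]; linarith
    have htI' : t ∈ I' := key t (lt_of_le_of_lt (le_max_right _ _) ht1) ht2
    have : t ≤ sSup I' := le_csSup hba' htI'
    have := lt_of_le_of_lt (le_max_left _ _) ht1
    linarith

lemma dist_eq_of {F G : ℝ ⥤ FGModuleCat 𝕜} (r : ℝ) (hr : 0 ≤ r)
    (hub : ∀ ε : ℝ, r < ε → Interleaved ε F G)
    (hlb : ∀ ε : ℝ, Interleaved ε F G → r ≤ ε) :
    interleavingDist F G = ENNReal.ofReal r := by
  apply le_antisymm
  · refine ENNReal.le_of_forall_pos_le_add fun δ hδ _ => ?_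
    have hδ' : (0 : ℝ) < δ := by exact_mod_cast hδ
    have hmem : ENNReal.ofReal (r + δ) ∈
        ENNReal.ofReal '' {ε : ℝ | Interleaved ε F G} :=
      ⟨r + δ, hub _ (by linarith), rfl⟩
    calc interleavingDist F G ≤ ENNReal.ofReal (r + δ) := sInf_le hmem
      _ = ENNReal.ofReal r + ENNReal.ofReal δ := ENNReal.ofReal_add hr hδ'.le
      _ = ENNReal.ofReal r + δ := by rw [ENNReal.ofReal_coe_nnreal]
  · apply le_sInf
    rintro s ⟨ε, hε, rfl⟩
    exact ENNReal.ofReal_le_ofReal (hlb ε hε)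

end AuxIL
/-- The interleaving distance between interval modules of bounded intervals:
(1) if `I = I' = ∅` it is `0`;
(2) if `I' = ∅` and `I` is nonempty with endpoints `a = inf I`, `b = sup I`, it is `(b-a)/2`;
(3) if both are nonempty with endpoints `a, b` and `a', b'`, it is
`min (max |a - a'| |b - b'|) (max ((b-a)/2) ((b'-a')/2))`. -/
theorem chi_dist_bounded_intervals (𝕜 : Type) [Field 𝕜] (I I' : Set ℝ)
    (hI : I.OrdConnected) (hI' : I'.OrdConnected)
    (hbd : Bornology.IsBounded I) (hbd' : Bornology.IsBounded I') :
    (I = ∅ → I' = ∅ → interleavingDist (chi 𝕜 I hI) (chi 𝕜 I' hI') = 0) ∧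
    (I.Nonempty → I' = ∅ →
      interleavingDist (chi 𝕜 I hI) (chi 𝕜 I' hI') =
        ENNReal.ofReal ((sSup I - sInf I) / 2)) ∧
    (I.Nonempty → I'.Nonempty →
      interleavingDist (chi 𝕜 I hI) (chi 𝕜 I' hI') =
        ENNReal.ofReal (min (max |sInf I - sInf I'| |sSup I - sSup I'|)
          (max ((sSup I - sInf I) / 2) ((sSup I' - sInf I') / 2)))) := by
  have hbb : BddBelow I := hbd.bddBelow
  have hba : BddAbove I := hbd.bddAbove
  have hbb' : BddBelow I' := hbd'.bddBelow
  have hba' : BddAbove I' := hbd'.bddAbove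
  refine ⟨?_, ?_, ?_⟩
  · intro hIe hI'e
    have h0 := dist_eq_of 𝕜 (F := chi 𝕜 I hI) (G := chi 𝕜 I' hI') 0 le_rfl
      (fun ε hε => ⟨zeroIL 𝕜 I I' hI hI' ε (by linarith)
        (fun x hx => by rw [hIe] at hx; exact absurd hx (Set.notMem_empty x))
        (fun x hx => by rw [hI'e] at hx; exact absurd hx (Set.notMem_empty x))⟩)
      (fun ε hil => by obtain ⟨il⟩ := hil; exact il.hε)
    simpa using h0
  · intro hne hI'e
    have hab : sInf I ≤ sSup I := csInf_le_csSup hne hbb hba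
    refine dist_eq_of 𝕜 _ (by linarith) (fun ε hε => ?_) (fun ε hil => ?_)
    · refine ⟨zeroIL 𝕜 I I' hI hI' ε (by linarith) (fun x hx hx2 => ?_)
        (fun x hx => by rw [hI'e] at hx; exact absurd hx (Set.notMem_empty x))⟩
      have h1 : sInf I ≤ x := csInf_le hbb hx
      have h2 : x + ε + ε ≤ sSup I := le_csSup hba hx2
      linarith
    · obtain ⟨il⟩ := hil
      have hε := il.hε
      by_contra hcon
      push_neg at hcon
      obtain ⟨x, hx, hxlt⟩ := exists_lt_of_csInf_lt hne
        (show sInf I < sSup I - (ε + ε) by linarith)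
      have hx2 : x + ε + ε ∈ I := mem_of_le_of_lt hI hne hx (by linarith) (by linarith)
      have hm := il_forces 𝕜 il hx hx2
      rw [hI'e] at hm
      exact absurd hm (Set.notMem_empty _)
  · intro hne hne'
    have hab : sInf I ≤ sSup I := csInf_le_csSup hne hbb hba
    have hab' : sInf I' ≤ sSup I' := csInf_le_csSup hne' hbb' hba'
    set r := min (max |sInf I - sInf I'| |sSup I - sSup I'|)
      (max ((sSup I - sInf I) / 2) ((sSup I' - sInf I') / 2)) with hr
    have hr0 : 0 ≤ r := by
      refine le_min ((abs_nonneg _).trans (le_max_left _ _)) ?_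
      have h0 : (0:ℝ) ≤ (sSup I - sInf I) / 2 := by linarith
      exact h0.trans (le_max_left _ _)
    refine dist_eq_of 𝕜 r hr0 (fun ε hεr => ?_) (fun ε hil => ?_)
    · rcases min_lt_iff.mp hεr with h | h
      · rcases max_lt_iff.mp h with ⟨ha, hb⟩
        rw [abs_lt] at ha hb
        exact ⟨shiftIL 𝕜 I I' hI hI' hne hne' hbb hba hbb' hba' ε
          (by linarith [ha.1]) (by linarith [ha.2]) (by linarith [hb.1]) (by linarith [hb.2])⟩
      · rcases max_lt_iff.mp h with ⟨h1, h2⟩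
        refine ⟨zeroIL 𝕜 I I' hI hI' ε (by linarith) (fun x hx hx2 => ?_)
          (fun x hx hx2 => ?_)⟩
        · have g1 := csInf_le hbb hx
          have g2 := le_csSup hba hx2
          linarith
        · have g1 := csInf_le hbb' hx
          have g2 := le_csSup hba' hx2
          linarith
    · obtain ⟨il⟩ := hil
      have hε := il.hε
      by_cases hA : ε + ε < sSup I - sInf I
      · obtain ⟨h1, h2⟩ := il_contain 𝕜 hne hbb' hba' il hA
        refine (min_le_left _ _).trans
          (max_le (abs_le.mpr ⟨?_, ?_⟩) (abs_le.mpr ⟨?_, ?_⟩)) <;>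
        · by_cases hB : ε + ε < sSup I' - sInf I'
          · obtain ⟨h3, h4⟩ := il_contain 𝕜 hne' hbb hba il.swap hB
            linarith
          · push_neg at hB
            linarith
      · by_cases hB : ε + ε < sSup I' - sInf I'
        · obtain ⟨h3, h4⟩ := il_contain 𝕜 hne' hbb hba il.swap hB
          push_neg at hA
          refine (min_le_left _ _).trans
            (max_le (abs_le.mpr ⟨?_, ?_⟩) (abs_le.mpr ⟨?_, ?_⟩)) <;> linarith
        · push_neg at hA hB
          refine (min_le_right _ _).trans (max_le ?_ ?_) <;> linarith
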